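/- arXiv:2207.13831 — 2 statements merged into one kernel-verified Lean document; each statement's English description precedes it below -/
import Mathlib

section
/- Let n ≥ 1, let L be an n×n real matrix, and for h ∈ ℝ set D(h) = I − h·L. Then for every index i, as h → 0, the (i,i) entry of the adjugate matrix satisfies adj(D(h))[i,i] = ∏_{k ≠ i} D(h)[k,k] − Σ_{unordered pairs {j,k} of distinct indices with j ≠ i, k ≠ i} D(h)[j,k]·D(h)[k,j]·∏_{l ∉ {i,j,k}} D(h)[l,l] + O(h³). -/
/-!
Expanding the (i,i) cofactor as a sum over the permutations fixing i, the identity contributes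
the product of the diagonal entries and the transpositions contribute the pair sum, with sign -1.
Every remaining permutation moves at least three indices, and each moved index k contributes the
off-diagonal entry D(h)[σ k, k] = -h L[σ k, k], so that term is O(h³).
-/

open Asymptotics Finset Equiv Equiv.Perm Matrix Topology

theorem Matrix.adjugate_apply_self {R ι : Type*} [CommRing R] [Fintype ι] [DecidableEq ι]
    (A : Matrix ι ι R) (i : ι) :
    A.adjugate i i = ∑ σ ∈ univ.filter (fun σ : Perm ι => σ i = i),
      ((sign σ : ℤ) : R) * ∏ k ∈ univ.erase i, A (σ k) k := by
  rw [adjugate_apply, det_apply', ← sum_filter_add_sum_filter_not univ (fun σ : Perm ι => σ i = i)]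
  have hmoving : ∀ σ ∈ univ.filter (fun σ : Perm ι => ¬σ i = i),
      ((sign σ : ℤ) : R) * ∏ k, A.updateRow i (Pi.single i 1) (σ k) k = 0 := by
    intro σ hσ
    have hne : σ⁻¹ i ≠ i := fun h => (mem_filter.mp hσ).2 (by simpa using congrArg σ h.symm)
    refine mul_eq_zero_of_right _ (prod_eq_zero (mem_univ (σ⁻¹ i)) ?_)
    rw [show σ (σ⁻¹ i) = i from σ.apply_symm_apply i, updateRow_self, Pi.single_eq_of_ne hne]
  rw [sum_eq_zero hmoving, add_zero]
  refine sum_congr rfl fun σ hσ => congrArg _ ?_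
  have hσi : σ i = i := (mem_filter.mp hσ).2
  rw [← mul_prod_erase univ _ (mem_univ i), hσi, updateRow_self, Pi.single_eq_same, one_mul]
  refine prod_congr rfl fun k hk => ?_
  rw [updateRow_ne fun h => ne_of_mem_erase hk (σ.injective (h.trans hσi.symm))]

theorem Equiv.swap_injOn_lt {ι : Type*} [LinearOrder ι] :
    Set.InjOn (fun p : ι × ι => swap p.1 p.2) {p | p.1 < p.2} := by
  rintro ⟨a, b⟩ (hab : a < b) ⟨c, d⟩ (hcd : c < d) (h : swap a b = swap c d)
  have ha : swap c d a = b := by rw [← h]; exact swap_apply_left a b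
  have hb : swap c d b = a := by rw [← h]; exact swap_apply_right a b
  rw [swap_apply_def] at ha hb
  split_ifs at ha hb <;> grind

theorem Matrix.sum_fixing_card_support_eq_two {R ι : Type*} [CommRing R] [Fintype ι]
    [LinearOrder ι] (A : Matrix ι ι R) (i : ι) :
    ∑ σ ∈ univ.filter (fun σ : Perm ι => σ i = i ∧ #σ.support = 2),
      ((sign σ : ℤ) : R) * ∏ k ∈ univ.erase i, A (σ k) k
    = -∑ p ∈ univ.filter (fun p : ι × ι => p.1 < p.2 ∧ p.1 ≠ i ∧ p.2 ≠ i),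
        A p.1 p.2 * A p.2 p.1 * ∏ l ∈ univ.filter (fun l => l ≠ i ∧ l ≠ p.1 ∧ l ≠ p.2), A l l := by
  rw [← sum_neg_distrib, eq_comm]
  refine sum_nbij (fun p => Equiv.swap p.1 p.2) ?_ ?_ ?_ ?_
  · rintro ⟨a, b⟩ hp
    simp only [mem_filter, mem_univ, true_and] at hp ⊢
    exact ⟨swap_apply_of_ne_of_ne (Ne.symm hp.2.1) (Ne.symm hp.2.2), card_support_swap hp.1.ne⟩
  · exact swap_injOn_lt.mono fun p hp => (mem_filter.mp hp).2.1
  · rintro σ hσ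
    simp only [coe_filter, mem_univ, true_and, Set.mem_ofPred_eq] at hσ
    obtain ⟨hσi, a, b, hab, rfl⟩ := hσ.imp_right card_support_eq_two.mp
    have hai : a ≠ i := by rintro rfl; exact hab (swap_apply_left a b ▸ hσi).symm
    have hbi : b ≠ i := by rintro rfl; exact hab (swap_apply_right a b ▸ hσi)
    rcases hab.lt_or_gt with hlt | hlt
    · exact ⟨(a, b), by simp [hlt, hai, hbi], rfl⟩
    · exact ⟨(b, a), by simp [hlt, hai, hbi], Equiv.swap_comm b a⟩
  · rintro ⟨a, b⟩ hp
    simp only [mem_filter, mem_univ, true_and] at hp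
    obtain ⟨hab, hai, hbi⟩ := hp
    have ha : a ∈ univ.erase i := mem_erase.mpr ⟨hai, mem_univ a⟩
    have hb : b ∈ (univ.erase i).erase a := mem_erase.mpr ⟨hab.ne', mem_erase.mpr ⟨hbi, mem_univ b⟩⟩
    have hrest :
        ((univ.erase i).erase a).erase b = univ.filter (fun l => l ≠ i ∧ l ≠ a ∧ l ≠ b) := by
      ext l; simp only [mem_erase, mem_filter, mem_univ, and_true, true_and]; tauto
    rw [sign_swap hab.ne, ← mul_prod_erase _ _ ha, ← mul_prod_erase _ _ hb, hrest,
      swap_apply_left, swap_apply_right]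
    have hfixed : ∀ l ∈ univ.filter (fun l => l ≠ i ∧ l ≠ a ∧ l ≠ b),
        A (Equiv.swap a b l) l = A l l :=
      fun l hl => by rw [swap_apply_of_ne_of_ne (mem_filter.mp hl).2.2.1 (mem_filter.mp hl).2.2.2]
    rw [prod_congr rfl hfixed]
    push_cast
    ring

theorem Matrix.adjugate_apply_self_sub_eq_sum {R ι : Type*} [CommRing R] [Fintype ι]
    [LinearOrder ι] (A : Matrix ι ι R) (i : ι) :
    A.adjugate i i -
      (∏ k ∈ univ.filter (fun k => k ≠ i), A k k -
        ∑ p ∈ univ.filter (fun p : ι × ι => p.1 < p.2 ∧ p.1 ≠ i ∧ p.2 ≠ i),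
          A p.1 p.2 * A p.2 p.1 * ∏ l ∈ univ.filter (fun l => l ≠ i ∧ l ≠ p.1 ∧ l ≠ p.2), A l l)
    = ∑ σ ∈ univ.filter (fun σ : Perm ι => σ i = i ∧ 3 ≤ #σ.support),
        ((sign σ : ℤ) : R) * ∏ k ∈ univ.erase i, A (σ k) k := by
  have hsmall : univ.filter (fun σ : Perm ι => σ i = i ∧ ¬3 ≤ #σ.support) =
      insert 1 (univ.filter fun σ : Perm ι => σ i = i ∧ #σ.support = 2) := by
    ext σ
    have h₀ : #σ.support = 0 ↔ σ = 1 := by rw [card_eq_zero, support_eq_empty_iff]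
    have h₁ := card_support_ne_one σ
    simp only [mem_filter, mem_univ, true_and, mem_insert]
    constructor
    · rintro ⟨hσi, hσ⟩
      rcases (by omega : #σ.support = 0 ∨ #σ.support = 2) with h | h
      · exact .inl (h₀.mp h)
      · exact .inr ⟨hσi, h⟩
    · rintro (rfl | ⟨hσi, h⟩)
      · simp
      · exact ⟨hσi, by omega⟩
  have hone : (1 : Perm ι) ∉ univ.filter fun σ : Perm ι => σ i = i ∧ #σ.support = 2 := by simp
  rw [adjugate_apply_self, ← sum_filter_add_sum_filter_not _ (fun σ => 3 ≤ #σ.support),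
    filter_filter, filter_filter, hsmall, sum_insert hone, sum_fixing_card_support_eq_two,
    filter_ne']
  simp only [Perm.sign_one, Units.val_one, Int.cast_one, one_mul, Perm.one_apply]
  ring

theorem Matrix.prod_one_sub_smul_apply_perm {R ι : Type*} [CommRing R] [Fintype ι]
    [DecidableEq ι] (L : Matrix ι ι R) (σ : Perm ι) {s : Finset ι} (hs : σ.support ⊆ s) (h : R) :
    ∏ k ∈ s, (1 - h • L) (σ k) k =
      (-h) ^ #σ.support *
        ((∏ k ∈ σ.support, L (σ k) k) * ∏ k ∈ s \ σ.support, (1 - h * L k k)) := by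
  have hmoved : ∀ k ∈ σ.support, (1 - h • L) (σ k) k = -h * L (σ k) k := fun k hk => by
    simp [one_apply_ne (mem_support.mp hk)]
  have hfixed : ∀ k ∈ s \ σ.support, (1 - h • L) (σ k) k = 1 - h * L k k := fun k hk => by
    simp [notMem_support.mp (mem_sdiff.mp hk).2]
  rw [← prod_sdiff hs, prod_congr rfl hmoved, prod_congr rfl hfixed, prod_mul_distrib, prod_const]
  ring

theorem Matrix.isBigO_prod_one_sub_smul_apply_perm {𝕜 ι : Type*} [NormedField 𝕜] [Fintype ι]
    [DecidableEq ι] (L : Matrix ι ι 𝕜) (σ : Perm ι) {s : Finset ι} (hs : σ.support ⊆ s) :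
    (fun h : 𝕜 => ∏ k ∈ s, (1 - h • L) (σ k) k) =O[𝓝 0] fun h => h ^ #σ.support := by
  simp_rw [prod_one_sub_smul_apply_perm L σ hs]
  have hpow : (fun h : 𝕜 => (-h) ^ #σ.support) =O[𝓝 0] fun h => h ^ #σ.support :=
    isBigO_of_le _ fun h => by
      rw [neg_pow, norm_mul, norm_pow, norm_neg, norm_one, one_pow, one_mul]
  have hbounded : (fun h : 𝕜 => (∏ k ∈ σ.support, L (σ k) k) * ∏ k ∈ s \ σ.support, (1 - h * L k k))
      =O[𝓝 0] fun _ => (1 : 𝕜) :=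
    (Continuous.tendsto (by fun_prop) 0).isBigO_one 𝕜
  simpa using hpow.mul hbounded

theorem Asymptotics.isBigO_pow_pow_nhds_zero_of_le {𝕜 : Type*} [NormedField 𝕜] {m k : ℕ}
    (h : m ≤ k) :
    (fun x : 𝕜 => x ^ k) =O[𝓝 0] fun x => x ^ m := by
  rcases h.eq_or_lt with rfl | hlt
  · exact isBigO_refl _ _
  · exact (isLittleO_pow_pow hlt).isBigO

theorem stmt_3_general (n : ℕ) (L : Matrix (Fin n) (Fin n) ℝ) (i : Fin n) :
    (fun h : ℝ =>
        (1 - h • L : Matrix (Fin n) (Fin n) ℝ).adjugate i i -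
          (∏ k ∈ univ.filter (fun k => k ≠ i), (1 - h • L : Matrix (Fin n) (Fin n) ℝ) k k -
            ∑ p ∈ univ.filter (fun p : Fin n × Fin n => p.1 < p.2 ∧ p.1 ≠ i ∧ p.2 ≠ i),
              (1 - h • L : Matrix (Fin n) (Fin n) ℝ) p.1 p.2 *
                (1 - h • L : Matrix (Fin n) (Fin n) ℝ) p.2 p.1 *
                ∏ l ∈ univ.filter (fun l => l ≠ i ∧ l ≠ p.1 ∧ l ≠ p.2),
                  (1 - h • L : Matrix (Fin n) (Fin n) ℝ) l l))
      =O[nhds (0 : ℝ)] fun h : ℝ => h ^ 3 := by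
  refine (IsBigO.fun_sum fun σ hσ => ?_).congr_left
    fun h => (adjugate_apply_self_sub_eq_sum (1 - h • L) i).symm
  obtain ⟨hσi, hσ⟩ := (mem_filter.mp hσ).2
  have hs : σ.support ⊆ univ.erase i := fun k hk =>
    mem_erase.mpr ⟨fun hki => mem_support.mp hk (hki ▸ hσi), mem_univ k⟩
  exact ((isBigO_prod_one_sub_smul_apply_perm L σ hs).trans
    (isBigO_pow_pow_nhds_zero_of_le hσ)).const_mul_left _

theorem stmt_3 (n : ℕ) (hn : 1 ≤ n) (L : Matrix (Fin n) (Fin n) ℝ) (i : Fin n) :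
    (fun h : ℝ =>
        (1 - h • L : Matrix (Fin n) (Fin n) ℝ).adjugate i i -
          (∏ k ∈ univ.filter (fun k => k ≠ i), (1 - h • L : Matrix (Fin n) (Fin n) ℝ) k k -
            ∑ p ∈ univ.filter (fun p : Fin n × Fin n => p.1 < p.2 ∧ p.1 ≠ i ∧ p.2 ≠ i),
              (1 - h • L : Matrix (Fin n) (Fin n) ℝ) p.1 p.2 *
                (1 - h • L : Matrix (Fin n) (Fin n) ℝ) p.2 p.1 *
                ∏ l ∈ univ.filter (fun l => l ≠ i ∧ l ≠ p.1 ∧ l ≠ p.2),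
                  (1 - h • L : Matrix (Fin n) (Fin n) ℝ) l l))
      =O[nhds (0 : ℝ)] fun h : ℝ => h ^ 3 :=
  stmt_3_general n L i
end

section
/- Let n ≥ 1, let L be an n×n real matrix, and for h ∈ ℝ set D(h) = I − h·L. Then for all indices i ≠ j, as h → 0, the (i,j) entry of the adjugate matrix satisfies adj(D(h))[i,j] = −D(h)[i,j]·∏_{l ∉ {i,j}} D(h)[l,l] + Σ_{k ≠ i, k ≠ j} D(h)[i,k]·D(h)[k,j]·∏_{l ∉ {i,j,k}} D(h)[l,l] + O(h³). -/
/-!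
Expand `adjugate D i j` à la Leibniz as `∑ sign σ * ∏_{l ≠ i} D (σ l) l` over the permutations
with `σ i = j`. Off-diagonal entries of `D h = 1 - h • L` are `O(h)` and diagonal ones `O(1)`, so
the term of `σ` is `O(h ^ m)`, where `m` counts the points `l ≠ i` moved by `σ`. The permutations
with `m ≤ 2` are the transposition `(i j)` and the 3-cycles `i ↦ j ↦ k ↦ i`, whose terms are
exactly the displayed main terms; every other one has `m ≥ 3`.
-/

open Asymptotics Finset

open Equiv Topology

namespace Matrix

variable {ι R : Type*} [Fintype ι] [DecidableEq ι] [CommRing R]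

theorem adjugate_apply_eq_sum_perm (A : Matrix ι ι R) (i j : ι) :
    A.adjugate i j = ∑ σ : Perm ι with σ i = j,
      ((Perm.sign σ : ℤ) : R) * ∏ l ∈ univ.erase i, A (σ l) l := by
  rw [adjugate_apply, det_apply', ← sum_filter_add_sum_filter_not univ (fun σ => σ i = j)]
  have h_bad : ∑ σ : Perm ι with ¬σ i = j, ((Perm.sign σ : ℤ) : R) *
      ∏ l, A.updateRow j (Pi.single i 1) (σ l) l = 0 := by
    refine sum_eq_zero fun σ hσ => ?_
    have hne : σ.symm j ≠ i := fun h => (mem_filter.mp hσ).2 (by rw [← h, apply_symm_apply])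
    rw [prod_eq_zero (i := σ.symm j) (mem_univ _) (by simp [Pi.single_eq_of_ne hne]), mul_zero]
  rw [h_bad, add_zero]
  refine sum_congr rfl fun σ hσ => ?_
  have hσ : σ i = j := (mem_filter.mp hσ).2
  have hrest : ∀ l ∈ univ.erase i, A.updateRow j (Pi.single i 1) (σ l) l = A (σ l) l :=
    fun l hl => by
      rw [updateRow_ne fun h => ne_of_mem_erase hl (σ.injective (h.trans hσ.symm))]
  rw [← mul_prod_erase univ _ (mem_univ i), prod_congr rfl hrest]
  simp [hσ]

/-- `swap i j * swap j k` is the transposition `(i j)` for `k = j` and the 3-cycle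
`i ↦ j ↦ k ↦ i` otherwise. -/
theorem sum_sign_mul_prod_swap_mul_swap (A : Matrix ι ι R) {i j : ι} (hij : i ≠ j) :
    ∑ k ∈ univ.erase i, ((Perm.sign (Equiv.swap i j * Equiv.swap j k) : ℤ) : R) *
        ∏ l ∈ univ.erase i, A ((Equiv.swap i j * Equiv.swap j k) l) l =
      -(A i j * ∏ l with l ≠ i ∧ l ≠ j, A l l) +
        ∑ k with k ≠ i ∧ k ≠ j, A i k * A k j * ∏ l with l ≠ i ∧ l ≠ j ∧ l ≠ k, A l l := by
  have hj : j ∈ univ.erase i := mem_erase.mpr ⟨hij.symm, mem_univ j⟩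
  have hij_set : ({l | l ≠ i ∧ l ≠ j} : Finset ι) = (univ.erase i).erase j := by
    ext; simp [and_comm]
  have hijk_set : ∀ k,
      ({l | l ≠ i ∧ l ≠ j ∧ l ≠ k} : Finset ι) = ((univ.erase i).erase j).erase k := by
    intro k; ext; simp; tauto
  rw [← add_sum_erase _ _ hj, ← hij_set]
  congr 1
  · rw [swap_self, ← Perm.one_def, mul_one, Perm.sign_swap hij, ← mul_prod_erase _ _ hj,
      swap_apply_right, hij_set]
    have hfix : ∀ l ∈ (univ.erase i).erase j, A (Equiv.swap i j l) l = A l l := fun l hl => by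
      rw [swap_apply_of_ne_of_ne (ne_of_mem_erase (mem_of_mem_erase hl)) (ne_of_mem_erase hl)]
    rw [prod_congr rfl hfix]
    push_cast; ring
  · refine sum_congr rfl fun k hk => ?_
    obtain ⟨hki, hkj⟩ : k ≠ i ∧ k ≠ j := by simpa using hk
    have hk' : k ∈ (univ.erase i).erase j := by simp [hki, hkj]
    rw [Perm.sign_mul, Perm.sign_swap hij, Perm.sign_swap hkj.symm, ← mul_prod_erase _ _ hj,
      ← mul_prod_erase _ _ hk', hijk_set]
    have hfix : ∀ l ∈ ((univ.erase i).erase j).erase k,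
        A ((Equiv.swap i j * Equiv.swap j k) l) l = A l l := fun l hl => by
      obtain ⟨hlk, hlj, hli, -⟩ := by simpa only [mem_erase] using hl
      rw [Perm.mul_apply, swap_apply_of_ne_of_ne hlj hlk, swap_apply_of_ne_of_ne hli hlj]
    rw [prod_congr rfl hfix]
    simp only [mul_neg, mul_one, neg_neg, Units.val_one, Int.cast_one, Perm.coe_mul,
      Function.comp_apply, swap_apply_left, swap_apply_of_ne_of_ne hki hkj, swap_apply_right,
      one_mul]
    ring

end Matrix

namespace Equiv.Perm

variable {ι : Type*} [Fintype ι] [DecidableEq ι]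

theorem two_lt_card_moved_of_ne_swap_mul_swap {σ : Perm ι} {i j : ι} (hij : i ≠ j)
    (hσ : σ i = j) (hne : σ ≠ swap i j * swap j (σ.symm i)) :
    2 < #{l ∈ univ.erase i | σ l ≠ l} := by
  set k := σ.symm i
  have hk : σ k = i := σ.apply_symm_apply i
  have hki : k ≠ i := fun h => hij ((h ▸ hk).symm.trans hσ)
  obtain ⟨x, hx⟩ : ∃ x, σ x ≠ (swap i j * swap j k) x := by
    by_contra! h; exact hne (Equiv.ext h)
  have hxi : x ≠ i := by
    rintro rfl; simp [hσ, swap_apply_of_ne_of_ne hij hki.symm] at hx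
  have hxk : x ≠ k := by
    rintro rfl; simp [hk] at hx
  simp only [two_lt_card, mem_filter, mem_erase, mem_univ, and_true]
  by_cases hxj : x = j
  · subst x
    have hjk : σ j ≠ k := by
      simpa [swap_apply_of_ne_of_ne hki (Ne.symm hxk)] using hx
    have hσj : σ j ≠ j := fun h => hij (σ.injective (hσ.trans h.symm))
    exact ⟨j, ⟨hxi, hσj⟩, k, ⟨hki, fun h => hki (hk ▸ h).symm⟩,
      σ j, ⟨fun h => hxk (σ.injective (h.trans hk.symm)), fun h => hσj (σ.injective h)⟩,
      hxk, hσj.symm, hjk.symm⟩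
  · have hσx : σ x ≠ x := by
      simpa [swap_apply_of_ne_of_ne hxi hxj, swap_apply_of_ne_of_ne hxj hxk] using hx
    exact ⟨j, ⟨hij.symm, fun h => hij (σ.injective (hσ.trans h.symm))⟩, x, ⟨hxi, hσx⟩,
      σ x, ⟨fun h => hxk (σ.injective (h.trans hk.symm)), fun h => hσx (σ.injective h)⟩,
      Ne.symm hxj, fun h => hxi (σ.injective (h.symm.trans hσ.symm)), hσx.symm⟩

end Equiv.Perm

theorem Asymptotics.isBigO_pow_pow_nhds_zero {𝕜 : Type*} [NormedField 𝕜] {m n : ℕ}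
    (h : m ≤ n) : (fun x : 𝕜 => x ^ n) =O[𝓝 0] fun x => x ^ m := by
  rcases h.eq_or_lt with rfl | hlt
  · exact isBigO_refl _ _
  · exact (isLittleO_pow_pow hlt).isBigO

namespace Matrix

variable {ι 𝕜 : Type*} [DecidableEq ι] [NormedField 𝕜]

theorem isBigO_one_sub_smul_apply (L : Matrix ι ι 𝕜) (a b : ι) :
    (fun h : 𝕜 => (1 - h • L) a b) =O[𝓝 0] fun h => h ^ (if a ≠ b then 1 else 0) := by
  by_cases hab : a = b
  · subst hab
    have : Continuous fun h : 𝕜 => (1 - h • L) a a := by fun_prop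
    simpa using (this.tendsto 0).isBigO_one 𝕜
  · simp only [ne_eq, hab, not_false_eq_true, if_true, pow_one, sub_apply, smul_apply,
      one_apply_ne hab, smul_eq_mul, zero_sub]
    exact (isBigO_const_mul_self (L a b) (fun h : 𝕜 => h) _).neg_left.congr_left fun h => by ring

theorem isBigO_prod_one_sub_smul_apply (L : Matrix ι ι 𝕜) (σ : Perm ι) (s : Finset ι) :
    (fun h : 𝕜 => ∏ l ∈ s, (1 - h • L) (σ l) l) =O[𝓝 0] fun h => h ^ #{l ∈ s | σ l ≠ l} := by
  have := IsBigO.finsetProd (s := s) fun l _ => isBigO_one_sub_smul_apply L (σ l) l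
  simpa only [prod_pow_eq_pow_sum, ← card_filter] using this

end Matrix

theorem stmt_4_general (n : ℕ) (L : Matrix (Fin n) (Fin n) ℝ) (i j : Fin n)
    (hij : i ≠ j) :
    (fun h : ℝ =>
        (1 - h • L : Matrix (Fin n) (Fin n) ℝ).adjugate i j -
          (-((1 - h • L : Matrix (Fin n) (Fin n) ℝ) i j *
              ∏ l ∈ univ.filter (fun l => l ≠ i ∧ l ≠ j),
                (1 - h • L : Matrix (Fin n) (Fin n) ℝ) l l) +
            ∑ k ∈ univ.filter (fun k => k ≠ i ∧ k ≠ j),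
              (1 - h • L : Matrix (Fin n) (Fin n) ℝ) i k *
                (1 - h • L : Matrix (Fin n) (Fin n) ℝ) k j *
                ∏ l ∈ univ.filter (fun l => l ≠ i ∧ l ≠ j ∧ l ≠ k),
                  (1 - h • L : Matrix (Fin n) (Fin n) ℝ) l l))
      =O[nhds (0 : ℝ)] fun h : ℝ => h ^ 3 := by
  set S : Finset (Perm (Fin n)) := {σ | σ i = j}
  set G := (univ.erase i).image fun k => Equiv.swap i j * Equiv.swap j k
  have hGS : G ⊆ S := by
    simp only [G, S, subset_iff, mem_image, mem_erase, mem_filter]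
    rintro _ ⟨k, ⟨hki, -⟩, rfl⟩
    simp [swap_apply_of_ne_of_ne hij hki.symm]
  have hinj : Set.InjOn (fun k => Equiv.swap i j * Equiv.swap j k) (univ.erase i) :=
    fun k _ k' _ h => by simpa using congr($(mul_left_cancel h) j)
  refine IsBigO.congr_left (f₁ := fun h => ∑ σ ∈ S \ G,
      ((Perm.sign σ : ℤ) : ℝ) * ∏ l ∈ univ.erase i, (1 - h • L) (σ l) l) ?_ fun h => ?_
  · refine IsBigO.fun_sum fun σ hσ => ?_
    obtain ⟨hσ, hσG⟩ : σ i = j ∧ σ ∉ G := by simpa [S] using hσ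
    have hk : σ.symm i ∈ univ.erase i :=
      mem_erase.mpr ⟨fun h => hij ((σ.symm_apply_eq.mp h).trans hσ), mem_univ _⟩
    have hne : σ ≠ Equiv.swap i j * Equiv.swap j (σ.symm i) := fun h =>
      hσG (mem_image.mpr ⟨_, hk, h.symm⟩)
    exact ((Matrix.isBigO_prod_one_sub_smul_apply L σ _).const_mul_left _).trans
      (isBigO_pow_pow_nhds_zero (Perm.two_lt_card_moved_of_ne_swap_mul_swap hij hσ hne))
  · rw [Matrix.adjugate_apply_eq_sum_perm, ← sum_sdiff hGS, sum_image hinj,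
      Matrix.sum_sign_mul_prod_swap_mul_swap _ hij, add_sub_cancel_right]

theorem stmt_4 (n : ℕ) (hn : 1 ≤ n) (L : Matrix (Fin n) (Fin n) ℝ) (i j : Fin n)
    (hij : i ≠ j) :
    (fun h : ℝ =>
        (1 - h • L : Matrix (Fin n) (Fin n) ℝ).adjugate i j -
          (-((1 - h • L : Matrix (Fin n) (Fin n) ℝ) i j *
              ∏ l ∈ univ.filter (fun l => l ≠ i ∧ l ≠ j),
                (1 - h • L : Matrix (Fin n) (Fin n) ℝ) l l) +
            ∑ k ∈ univ.filter (fun k => k ≠ i ∧ k ≠ j),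
              (1 - h • L : Matrix (Fin n) (Fin n) ℝ) i k *
                (1 - h • L : Matrix (Fin n) (Fin n) ℝ) k j *
                ∏ l ∈ univ.filter (fun l => l ≠ i ∧ l ≠ j ∧ l ≠ k),
                  (1 - h • L : Matrix (Fin n) (Fin n) ℝ) l l))
      =O[nhds (0 : ℝ)] fun h : ℝ => h ^ 3 :=
  stmt_4_general n L i j hij
end
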